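/- Let x̄ ∈ F be a feasible point of NSOCP. Robinson's CQ holds at x̄ if, and only if, for every choice of unit vectors w̄_j ∈ ℝ^{m_j−1}, j ∈ I_0(x̄), the indexed family of vectors {Dg_j(x̄)ᵀ(1, −ĝ_j(x̄)/‖ĝ_j(x̄)‖)}_{j∈I_B(x̄)} ∪ {Dg_j(x̄)ᵀ(1, −w̄_j)}_{j∈I_0(x̄)} ∪ {Dg_j(x̄)ᵀ(1, w̄_j)}_{j∈I_0(x̄)} is positively linearly independent. -/

import Mathlib

open Filter Topology

noncomputable section

/-- Euclidean space `ℝ^k`. -/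
abbrev Evec (k : ℕ) : Type := EuclideanSpace ℝ (Fin k)

/-- Membership of `y = (y₀, ŷ) ∈ ℝ × ℝ^p` in the second-order (Lorentz) cone `Λ_{1+p}`. -/
def inSOC {p : ℕ} (y : ℝ × Evec p) : Prop := ‖y.2‖ ≤ y.1

/-- Normalization `v / ‖v‖`. -/
def unitv {p : ℕ} (v : Evec p) : Evec p := ‖v‖⁻¹ • v

/-- The transposed Jacobian `Dg(x)ᵀ u` of `g = (g0, gh) : ℝ^n → ℝ × ℝ^p` at `x`,
applied to `u = (u₀, û) ∈ ℝ × ℝ^p`. -/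
def dgT {n p : ℕ} (g0 : Evec n → ℝ) (gh : Evec n → Evec p) (x : Evec n)
    (u : ℝ × Evec p) : Evec n :=
  u.1 • gradient g0 x + ∑ i, u.2 i • gradient (fun y => gh y i) x

/-- Euclidean inner product on `ℝ × ℝ^p`. -/
def pairInner {p : ℕ} (u v : ℝ × Evec p) : ℝ := u.1 * v.1 + (inner ℝ u.2 v.2 : ℝ)

/-- Squared Euclidean norm on `ℝ × ℝ^p`. -/
def pairSq {p : ℕ} (y : ℝ × Evec p) : ℝ := y.1 ^ 2 + ‖y.2‖ ^ 2

/-- The Euclidean orthogonal projection onto the second-order cone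
(expressed through the spectral decomposition). -/
def projSOC {p : ℕ} (y : ℝ × Evec p) : ℝ × Evec p :=
  ((max (y.1 - ‖y.2‖) 0 + max (y.1 + ‖y.2‖) 0) / 2,
    ((max (y.1 + ‖y.2‖) 0 - max (y.1 - ‖y.2‖) 0) / (2 * ‖y.2‖)) • y.2)

/-- `j ∈ I₀(x)`, i.e. `g_j(x) = 0`. -/
def memI0 {n q : ℕ} {m : Fin q → ℕ} (g0 : Fin q → Evec n → ℝ)
    (gh : (j : Fin q) → Evec n → Evec (m j)) (x : Evec n) (j : Fin q) : Prop :=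
  g0 j x = 0 ∧ gh j x = 0

/-- `j ∈ I_B(x)`, i.e. `g_j(x) ≠ 0` and `g_{j,0}(x) = ‖ĝ_j(x)‖`. -/
def memIB {n q : ℕ} {m : Fin q → ℕ} (g0 : Fin q → Evec n → ℝ)
    (gh : (j : Fin q) → Evec n → Evec (m j)) (x : Evec n) (j : Fin q) : Prop :=
  ¬ (g0 j x = 0 ∧ gh j x = 0) ∧ g0 j x = ‖gh j x‖

/-- The linear combination, with coefficients `η, a, b`, of the family
`D_{J_B,J_-,J_+}(x, w)`: the vectors `Dg_j(x)ᵀ(1, -ĝ_j(x)/‖ĝ_j(x)‖)` (coefficients `η j`),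
`Dg_j(x)ᵀ(1, -w j)` (coefficients `a j`) and `Dg_j(x)ᵀ(1, w j)` (coefficients `b j`). -/
def famComb {n q : ℕ} {m : Fin q → ℕ} (g0 : Fin q → Evec n → ℝ)
    (gh : (j : Fin q) → Evec n → Evec (m j)) (x : Evec n)
    (w : (j : Fin q) → Evec (m j)) (η a b : Fin q → ℝ) : Evec n :=
  ∑ j, (η j • dgT (g0 j) (gh j) x (1, -unitv (gh j x))
      + a j • dgT (g0 j) (gh j) x (1, -(w j))
      + b j • dgT (g0 j) (gh j) x (1, w j))

/-- The family `D_{J_B,J_-,J_+}(x, w)` is linearly dependent. -/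
def linDepD {n q : ℕ} {m : Fin q → ℕ} (g0 : Fin q → Evec n → ℝ)
    (gh : (j : Fin q) → Evec n → Evec (m j)) (JB Jm Jp : Fin q → Prop)
    (x : Evec n) (w : (j : Fin q) → Evec (m j)) : Prop :=
  ∃ η a b : Fin q → ℝ,
    (∀ j, ¬ JB j → η j = 0) ∧ (∀ j, ¬ Jm j → a j = 0) ∧ (∀ j, ¬ Jp j → b j = 0) ∧
    ¬ (∀ j, η j = 0 ∧ a j = 0 ∧ b j = 0) ∧
    famComb g0 gh x w η a b = 0

/-- The family `D_{J_B,J_-,J_+}(x, w)` is positively linearly dependent. -/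
def posLinDepD {n q : ℕ} {m : Fin q → ℕ} (g0 : Fin q → Evec n → ℝ)
    (gh : (j : Fin q) → Evec n → Evec (m j)) (JB Jm Jp : Fin q → Prop)
    (x : Evec n) (w : (j : Fin q) → Evec (m j)) : Prop :=
  ∃ η a b : Fin q → ℝ,
    (∀ j, 0 ≤ η j) ∧ (∀ j, 0 ≤ a j) ∧ (∀ j, 0 ≤ b j) ∧
    (∀ j, ¬ JB j → η j = 0) ∧ (∀ j, ¬ Jm j → a j = 0) ∧ (∀ j, ¬ Jp j → b j = 0) ∧
    ¬ (∀ j, η j = 0 ∧ a j = 0 ∧ b j = 0) ∧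
    famComb g0 gh x w η a b = 0

/-- The full family `{Dg_j(x)ᵀ u₁(g_j(x))}_{j ∈ I_B(x)} ∪
`{Dg_j(x)ᵀ(1,-w j), Dg_j(x)ᵀ(1,w j)}_{j ∈ I₀(x)}` is linearly independent. -/
def famLinIndep {n q : ℕ} {m : Fin q → ℕ} (g0 : Fin q → Evec n → ℝ)
    (gh : (j : Fin q) → Evec n → Evec (m j)) (x : Evec n)
    (w : (j : Fin q) → Evec (m j)) : Prop :=
  ∀ η a b : Fin q → ℝ,
    (∀ j, ¬ memIB g0 gh x j → η j = 0) →
    (∀ j, ¬ memI0 g0 gh x j → a j = 0 ∧ b j = 0) →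
    famComb g0 gh x w η a b = 0 →
    ∀ j, η j = 0 ∧ a j = 0 ∧ b j = 0

/-- The full family is positively linearly independent. -/
def famPosLinIndep {n q : ℕ} {m : Fin q → ℕ} (g0 : Fin q → Evec n → ℝ)
    (gh : (j : Fin q) → Evec n → Evec (m j)) (x : Evec n)
    (w : (j : Fin q) → Evec (m j)) : Prop :=
  ∀ η a b : Fin q → ℝ,
    (∀ j, 0 ≤ η j) → (∀ j, 0 ≤ a j) → (∀ j, 0 ≤ b j) →
    (∀ j, ¬ memIB g0 gh x j → η j = 0) →
    (∀ j, ¬ memI0 g0 gh x j → a j = 0 ∧ b j = 0) →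
    famComb g0 gh x w η a b = 0 →
    ∀ j, η j = 0 ∧ a j = 0 ∧ b j = 0

/-- An admissible choice, along the (perturbed) sequence `x k + Δ`, of eigenvector
parameters `w k j` (for `k ∈ I`, `j ∈ I₀(xb)`) together with their limits `wb j`. -/
def eigParams {n q : ℕ} {m : Fin q → ℕ} (g0 : Fin q → Evec n → ℝ)
    (gh : (j : Fin q) → Evec n → Evec (m j)) (xb : Evec n) (x : ℕ → Evec n)
    (Δ : ℕ → (j : Fin q) → ℝ × Evec (m j)) (I : Set ℕ)
    (w : ℕ → (j : Fin q) → Evec (m j)) (wb : (j : Fin q) → Evec (m j)) : Prop :=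
  (∀ k ∈ I, ∀ j, memI0 g0 gh xb j → ‖w k j‖ = 1 ∧
      (gh j (x k) + (Δ k j).2 ≠ 0 → w k j = unitv (gh j (x k) + (Δ k j).2))) ∧
  (∀ j, memI0 g0 gh xb j → ‖wb j‖ = 1 ∧
      Tendsto (fun k => w k j) (atTop ⊓ 𝓟 I) (𝓝 (wb j)))

/-- Weak-nondegeneracy at `xb`. -/
def weakNondeg {n q : ℕ} {m : Fin q → ℕ} (g0 : Fin q → Evec n → ℝ)
    (gh : (j : Fin q) → Evec n → Evec (m j)) (xb : Evec n) : Prop :=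
  ∀ x : ℕ → Evec n, Tendsto x atTop (𝓝 xb) →
    ∃ (I : Set ℕ) (w : ℕ → (j : Fin q) → Evec (m j)) (wb : (j : Fin q) → Evec (m j)),
      I.Infinite ∧ eigParams g0 gh xb x (fun _ _ => 0) I w wb ∧
      famLinIndep g0 gh xb wb

/-- Weak-Robinson's CQ at `xb`. -/
def weakRobinson {n q : ℕ} {m : Fin q → ℕ} (g0 : Fin q → Evec n → ℝ)
    (gh : (j : Fin q) → Evec n → Evec (m j)) (xb : Evec n) : Prop :=
  ∀ x : ℕ → Evec n, Tendsto x atTop (𝓝 xb) →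
    ∃ (I : Set ℕ) (w : ℕ → (j : Fin q) → Evec (m j)) (wb : (j : Fin q) → Evec (m j)),
      I.Infinite ∧ eigParams g0 gh xb x (fun _ _ => 0) I w wb ∧
      famPosLinIndep g0 gh xb wb

/-- Weak-CRCQ at `xb`. -/
def weakCRCQ {n q : ℕ} {m : Fin q → ℕ} (g0 : Fin q → Evec n → ℝ)
    (gh : (j : Fin q) → Evec n → Evec (m j)) (xb : Evec n) : Prop :=
  ∀ x : ℕ → Evec n, Tendsto x atTop (𝓝 xb) →
    ∃ (I : Set ℕ) (w : ℕ → (j : Fin q) → Evec (m j)) (wb : (j : Fin q) → Evec (m j)),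
      I.Infinite ∧ eigParams g0 gh xb x (fun _ _ => 0) I w wb ∧
      ∀ JB Jm Jp : Fin q → Prop,
        (∀ j, JB j → memIB g0 gh xb j) → (∀ j, Jm j → memI0 g0 gh xb j) →
        (∀ j, Jp j → memI0 g0 gh xb j) →
        linDepD g0 gh JB Jm Jp xb wb →
        ∀ᶠ k in atTop ⊓ 𝓟 I, linDepD g0 gh JB Jm Jp (x k) (w k)

/-- Weak-CPLD at `xb`. -/
def weakCPLD {n q : ℕ} {m : Fin q → ℕ} (g0 : Fin q → Evec n → ℝ)
    (gh : (j : Fin q) → Evec n → Evec (m j)) (xb : Evec n) : Prop :=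
  ∀ x : ℕ → Evec n, Tendsto x atTop (𝓝 xb) →
    ∃ (I : Set ℕ) (w : ℕ → (j : Fin q) → Evec (m j)) (wb : (j : Fin q) → Evec (m j)),
      I.Infinite ∧ eigParams g0 gh xb x (fun _ _ => 0) I w wb ∧
      ∀ JB Jm Jp : Fin q → Prop,
        (∀ j, JB j → memIB g0 gh xb j) → (∀ j, Jm j → memI0 g0 gh xb j) →
        (∀ j, Jp j → memI0 g0 gh xb j) →
        posLinDepD g0 gh JB Jm Jp xb wb →
        ∀ᶠ k in atTop ⊓ 𝓟 I, linDepD g0 gh JB Jm Jp (x k) (w k)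

/-- Seq-CRCQ at `xb`. -/
def seqCRCQ {n q : ℕ} {m : Fin q → ℕ} (g0 : Fin q → Evec n → ℝ)
    (gh : (j : Fin q) → Evec n → Evec (m j)) (xb : Evec n) : Prop :=
  ∀ (x : ℕ → Evec n) (Δ : ℕ → (j : Fin q) → ℝ × Evec (m j)),
    Tendsto x atTop (𝓝 xb) →
    (∀ j, memI0 g0 gh xb j ∨ memIB g0 gh xb j → Tendsto (fun k => Δ k j) atTop (𝓝 0)) →
    ∃ (I : Set ℕ) (w : ℕ → (j : Fin q) → Evec (m j)) (wb : (j : Fin q) → Evec (m j)),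
      I.Infinite ∧ eigParams g0 gh xb x Δ I w wb ∧
      ∀ JB Jm Jp : Fin q → Prop,
        (∀ j, JB j → memIB g0 gh xb j) → (∀ j, Jm j → memI0 g0 gh xb j) →
        (∀ j, Jp j → memI0 g0 gh xb j) →
        linDepD g0 gh JB Jm Jp xb wb →
        ∀ᶠ k in atTop ⊓ 𝓟 I, linDepD g0 gh JB Jm Jp (x k) (w k)

/-- Seq-CPLD at `xb`. -/
def seqCPLD {n q : ℕ} {m : Fin q → ℕ} (g0 : Fin q → Evec n → ℝ)
    (gh : (j : Fin q) → Evec n → Evec (m j)) (xb : Evec n) : Prop :=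
  ∀ (x : ℕ → Evec n) (Δ : ℕ → (j : Fin q) → ℝ × Evec (m j)),
    Tendsto x atTop (𝓝 xb) →
    (∀ j, memI0 g0 gh xb j ∨ memIB g0 gh xb j → Tendsto (fun k => Δ k j) atTop (𝓝 0)) →
    ∃ (I : Set ℕ) (w : ℕ → (j : Fin q) → Evec (m j)) (wb : (j : Fin q) → Evec (m j)),
      I.Infinite ∧ eigParams g0 gh xb x Δ I w wb ∧
      ∀ JB Jm Jp : Fin q → Prop,
        (∀ j, JB j → memIB g0 gh xb j) → (∀ j, Jm j → memI0 g0 gh xb j) →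
        (∀ j, Jp j → memI0 g0 gh xb j) →
        posLinDepD g0 gh JB Jm Jp xb wb →
        ∀ᶠ k in atTop ⊓ 𝓟 I, linDepD g0 gh JB Jm Jp (x k) (w k)

/-- The linear combination appearing in the definitions of nondegeneracy and
Robinson's CQ: `Σ_{j} (η j • Dg_j(x)ᵀ(g_{j,0}(x), -ĝ_j(x)) + Dg_j(x)ᵀ (y j))`. -/
def ndgComb {n q : ℕ} {m : Fin q → ℕ} (g0 : Fin q → Evec n → ℝ)
    (gh : (j : Fin q) → Evec n → Evec (m j)) (x : Evec n)
    (η : Fin q → ℝ) (y : (j : Fin q) → ℝ × Evec (m j)) : Evec n :=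
  ∑ j, (η j • dgT (g0 j) (gh j) x (g0 j x, -(gh j x)) + dgT (g0 j) (gh j) x (y j))

/-- Nondegeneracy at `xb`. -/
def Nondegenerate {n q : ℕ} {m : Fin q → ℕ} (g0 : Fin q → Evec n → ℝ)
    (gh : (j : Fin q) → Evec n → Evec (m j)) (xb : Evec n) : Prop :=
  ∀ (η : Fin q → ℝ) (y : (j : Fin q) → ℝ × Evec (m j)),
    (∀ j, ¬ memIB g0 gh xb j → η j = 0) →
    (∀ j, ¬ memI0 g0 gh xb j → y j = 0) →
    ndgComb g0 gh xb η y = 0 →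
    (∀ j, η j = 0) ∧ (∀ j, y j = 0)

/-- Robinson's CQ at `xb`. -/
def RobinsonCQ {n q : ℕ} {m : Fin q → ℕ} (g0 : Fin q → Evec n → ℝ)
    (gh : (j : Fin q) → Evec n → Evec (m j)) (xb : Evec n) : Prop :=
  ∀ (η : Fin q → ℝ) (y : (j : Fin q) → ℝ × Evec (m j)),
    (∀ j, 0 ≤ η j) → (∀ j, inSOC (y j)) →
    (∀ j, ¬ memIB g0 gh xb j → η j = 0) →
    (∀ j, ¬ memI0 g0 gh xb j → y j = 0) →
    ndgComb g0 gh xb η y = 0 →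
    (∀ j, η j = 0) ∧ (∀ j, y j = 0)

/-- The KKT conditions at `xb` for objective `f`. -/
def isKKT {n q : ℕ} {m : Fin q → ℕ} (f : Evec n → ℝ) (g0 : Fin q → Evec n → ℝ)
    (gh : (j : Fin q) → Evec n → Evec (m j)) (xb : Evec n) : Prop :=
  ∃ μ : (j : Fin q) → ℝ × Evec (m j),
    (∀ j, inSOC (μ j)) ∧
    gradient f xb = ∑ j, dgT (g0 j) (gh j) xb (μ j) ∧
    ∀ j, pairInner (μ j) (g0 j xb, gh j xb) = 0

/-- The metric subregularity CQ (MSCQ) at `xb`, with Euclidean distances. -/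
def MSCQat {n q : ℕ} {m : Fin q → ℕ} (g0 : Fin q → Evec n → ℝ)
    (gh : (j : Fin q) → Evec n → Evec (m j)) (xb : Evec n) : Prop :=
  ∃ γ > (0:ℝ), ∃ ε > (0:ℝ), ∀ x : Evec n, ‖x - xb‖ < ε →
    Metric.infDist x {z : Evec n | ∀ j, ‖gh j z‖ ≤ g0 j z} ≤
      γ * sInf {d : ℝ | ∃ z : (j : Fin q) → ℝ × Evec (m j),
        (∀ j, inSOC (z j)) ∧
        d = Real.sqrt (∑ j, ((g0 j x - (z j).1) ^ 2 + ‖gh j x - (z j).2‖ ^ 2))}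

lemma dgT_smul {n p : ℕ} (g0 : Evec n → ℝ) (gh : Evec n → Evec p) (x : Evec n)
    (c : ℝ) (u : ℝ × Evec p) : dgT g0 gh x (c • u) = c • dgT g0 gh x u := by
  simp only [dgT, Prod.smul_fst, Prod.smul_snd, PiLp.smul_apply, smul_eq_mul,
    smul_add, Finset.smul_sum, smul_smul]

lemma dgT_add {n p : ℕ} (g0 : Evec n → ℝ) (gh : Evec n → Evec p) (x : Evec n)
    (u v : ℝ × Evec p) : dgT g0 gh x (u + v) = dgT g0 gh x u + dgT g0 gh x v := by
  simp only [dgT, Prod.fst_add, Prod.snd_add, PiLp.add_apply, add_smul,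
    Finset.sum_add_distrib]
  abel

lemma dgT_zero {n p : ℕ} (g0 : Evec n → ℝ) (gh : Evec n → Evec p) (x : Evec n) :
    dgT g0 gh x 0 = 0 := by
  simp [dgT]

lemma ab_pair {p : ℕ} (a b : ℝ) (w : Evec p) :
    a • ((1:ℝ), -w) + b • ((1:ℝ), w) = (a + b, (b - a) • w) := by
  refine Prod.ext ?_ ?_
  · simp [smul_eq_mul]
  · simp only [Prod.snd_add, Prod.smul_snd]
    module

lemma norm_unitv {p : ℕ} {v : Evec p} (hv : v ≠ 0) : ‖unitv v‖ = 1 := by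
  have h : ‖v‖ ≠ 0 := norm_ne_zero_iff.2 hv
  simp [unitv, norm_smul, abs_of_nonneg (inv_nonneg.2 (norm_nonneg v)),
    inv_mul_cancel₀ h]

lemma smul_unitv {p : ℕ} (v : Evec p) : ‖v‖ • unitv v = v := by
  by_cases hv : v = 0
  · simp [hv]
  · have h : ‖v‖ ≠ 0 := norm_ne_zero_iff.2 hv
    simp [unitv, smul_smul, mul_inv_cancel₀ h]

lemma memIB_gh_ne {n q : ℕ} {m : Fin q → ℕ} {g0 : Fin q → Evec n → ℝ}
    {gh : (j : Fin q) → Evec n → Evec (m j)} {xb : Evec n} {j : Fin q}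
    (hIB : memIB g0 gh xb j) : gh j xb ≠ 0 := by
  intro h
  exact hIB.1 ⟨by rw [hIB.2, h, norm_zero], h⟩

lemma memIB_g0_pos {n q : ℕ} {m : Fin q → ℕ} {g0 : Fin q → Evec n → ℝ}
    {gh : (j : Fin q) → Evec n → Evec (m j)} {xb : Evec n} {j : Fin q}
    (hIB : memIB g0 gh xb j) : 0 < g0 j xb := by
  rw [hIB.2]
  exact norm_pos_iff.2 (memIB_gh_ne hIB)

lemma IB_pair_eq {n q : ℕ} {m : Fin q → ℕ} {g0 : Fin q → Evec n → ℝ}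
    {gh : (j : Fin q) → Evec n → Evec (m j)} {xb : Evec n} {j : Fin q}
    (hIB : memIB g0 gh xb j) :
    (g0 j xb, -(gh j xb)) = g0 j xb • ((1:ℝ), -unitv (gh j xb)) := by
  refine Prod.ext ?_ ?_
  · simp [smul_eq_mul]
  · simp only [Prod.smul_snd, smul_neg]
    rw [hIB.2, smul_unitv]

/-- Robinson's CQ holds at a feasible `xb` iff for every choice of unit
vectors `w j ∈ ℝ^{m_j - 1}`, `j ∈ I₀(xb)`, the family
`{Dg_j(xb)ᵀ(1, -ĝ_j(xb)/‖ĝ_j(xb)‖)}_{j ∈ I_B}` ∪ `{Dg_j(xb)ᵀ(1,-w j), Dg_j(xb)ᵀ(1,w j)}_{j ∈ I₀}`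
is positively linearly independent. -/
theorem stmt3 {n q : ℕ} (m : Fin q → ℕ) (hm : ∀ j, 1 ≤ m j)
    (f : Evec n → ℝ) (hf : ContDiff ℝ 1 f)
    (g0 : Fin q → Evec n → ℝ) (gh : (j : Fin q) → Evec n → Evec (m j))
    (hg : ∀ j, ContDiff ℝ 1 fun x => (g0 j x, gh j x))
    (xb : Evec n) (hxb : ∀ j, ‖gh j xb‖ ≤ g0 j xb) :
    RobinsonCQ g0 gh xb ↔
      ∀ w : (j : Fin q) → Evec (m j), (∀ j, memI0 g0 gh xb j → ‖w j‖ = 1) →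
        famPosLinIndep g0 gh xb w := by
  classical
  constructor
  · -- Robinson ⇒ positively linearly independent families
    intro hRob w hw η a b hη ha hb hsuppη hsuppab hcomb
    set ηR : Fin q → ℝ := fun j => (g0 j xb)⁻¹ * η j with hηR
    set y : (j : Fin q) → ℝ × Evec (m j) :=
      fun j => a j • ((1:ℝ), -(w j)) + b j • ((1:ℝ), w j) with hy
    have hy' : ∀ j, y j = (a j + b j, (b j - a j) • w j) := fun j => ab_pair _ _ _
    have hmain := hRob ηR y
      (fun j => mul_nonneg (inv_nonneg.2 (le_trans (norm_nonneg _) (hxb j))) (hη j))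
      (by
        intro j
        rw [inSOC, hy' j]
        by_cases hI0 : memI0 g0 gh xb j
        · have hwj := hw j hI0
          simp only [norm_smul, Real.norm_eq_abs, hwj, mul_one]
          have := hη j; have := ha j; have := hb j
          exact abs_le.2 ⟨by linarith, by linarith⟩
        · obtain ⟨ha0, hb0⟩ := hsuppab j hI0
          simp [ha0, hb0])
      (by intro j hj; rw [hηR]; simp [hsuppη j hj])
      (by intro j hj; obtain ⟨ha0, hb0⟩ := hsuppab j hj; simp [hy, ha0, hb0])
      (by
        rw [ndgComb, ← hcomb, famComb]
        refine Finset.sum_congr rfl fun j _ => ?_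
        have h2 : dgT (g0 j) (gh j) xb (y j)
            = a j • dgT (g0 j) (gh j) xb (1, -(w j))
              + b j • dgT (g0 j) (gh j) xb (1, w j) := by
          rw [hy]
          rw [dgT_add, dgT_smul, dgT_smul]
        have h1 : ηR j • dgT (g0 j) (gh j) xb (g0 j xb, -(gh j xb))
            = η j • dgT (g0 j) (gh j) xb (1, -unitv (gh j xb)) := by
          by_cases hIB : memIB g0 gh xb j
          · rw [IB_pair_eq hIB, dgT_smul, smul_smul, hηR]
            have hg0 : g0 j xb ≠ 0 := ne_of_gt (memIB_g0_pos hIB)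
            congr 1
            field_simp
          · simp [hηR, hsuppη j hIB]
        rw [h1, h2]
        abel)
    obtain ⟨hη0, hy0⟩ := hmain
    intro j
    have hab : a j + b j = 0 := by
      have := congrArg Prod.fst ((hy' j).symm.trans (hy0 j))
      simpa using this
    have haj : a j = 0 := by have := ha j; have := hb j; linarith
    have hbj : b j = 0 := by have := ha j; have := hb j; linarith
    refine ⟨?_, haj, hbj⟩
    by_cases hIB : memIB g0 gh xb j
    · have hg0 : (g0 j xb)⁻¹ ≠ 0 := inv_ne_zero (ne_of_gt (memIB_g0_pos hIB))
      have := hη0 j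
      rw [hηR] at this
      exact (mul_eq_zero.1 this).resolve_left hg0
    · exact hsuppη j hIB
  · -- positively linearly independent families ⇒ Robinson
    intro hFam η y hη hySOC hsuppη hsuppy hcomb
    set w : (j : Fin q) → Evec (m j) :=
      fun j => if h : (y j).2 = 0 then EuclideanSpace.single (⟨0, hm j⟩ : Fin (m j)) (1:ℝ)
        else unitv ((y j).2) with hwdef
    have hw : ∀ j, ‖w j‖ = 1 := by
      intro j
      rw [hwdef]
      by_cases h : (y j).2 = 0
      · simp [h]
      · simp only [h, dif_neg, not_false_iff]
        exact norm_unitv h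
    set a : Fin q → ℝ := fun j => ((y j).1 - ‖(y j).2‖) / 2 with hadef
    set b : Fin q → ℝ := fun j => ((y j).1 + ‖(y j).2‖) / 2 with hbdef
    set ηR : Fin q → ℝ := fun j => g0 j xb * η j with hηRdef
    have hykey : ∀ j, a j • ((1:ℝ), -(w j)) + b j • ((1:ℝ), w j) = y j := by
      intro j
      rw [ab_pair]
      refine Prod.ext ?_ ?_
      · show a j + b j = (y j).1
        rw [hadef, hbdef]; ring
      · show (b j - a j) • w j = (y j).2
        have hba : b j - a j = ‖(y j).2‖ := by rw [hadef, hbdef]; ring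
        rw [hba, hwdef]
        by_cases h : (y j).2 = 0
        · simp [h]
        · simp only [h, dif_neg, not_false_iff]
          exact smul_unitv _
    have hmain := hFam w (fun j _ => hw j) ηR a b
      (fun j => mul_nonneg (le_trans (norm_nonneg _) (hxb j)) (hη j))
      (fun j => by
        have := hySOC j
        rw [inSOC] at this
        rw [hadef]; dsimp only; linarith)
      (fun j => by
        have h1 := norm_nonneg (y j).2
        have := hySOC j
        rw [inSOC] at this
        rw [hbdef]; dsimp only; linarith)
      (by intro j hj; rw [hηRdef]; simp [hsuppη j hj])
      (by
        intro j hj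
        have hy0 := hsuppy j hj
        constructor
        · rw [hadef]; simp [hy0]
        · rw [hbdef]; simp [hy0])
      (by
        rw [famComb, ← hcomb, ndgComb]
        refine Finset.sum_congr rfl fun j _ => ?_
        have h2 : dgT (g0 j) (gh j) xb (y j)
            = a j • dgT (g0 j) (gh j) xb (1, -(w j))
              + b j • dgT (g0 j) (gh j) xb (1, w j) := by
          rw [← hykey j, dgT_add, dgT_smul, dgT_smul]
        have h1 : ηR j • dgT (g0 j) (gh j) xb (1, -unitv (gh j xb))
            = η j • dgT (g0 j) (gh j) xb (g0 j xb, -(gh j xb)) := by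
          by_cases hIB : memIB g0 gh xb j
          · rw [IB_pair_eq hIB, dgT_smul, smul_smul, hηRdef]
            congr 1
            ring
          · simp [hηRdef, hsuppη j hIB]
        rw [h2, h1]
        abel)
    constructor
    · intro j
      by_cases hIB : memIB g0 gh xb j
      · have hg0 : g0 j xb ≠ 0 := ne_of_gt (memIB_g0_pos hIB)
        have := (hmain j).1
        rw [hηRdef] at this
        exact (mul_eq_zero.1 this).resolve_left hg0
      · exact hsuppη j hIB
    · intro j
      by_cases hI0 : memI0 g0 gh xb j
      · obtain ⟨-, haj, hbj⟩ := hmain j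
        rw [hadef] at haj; rw [hbdef] at hbj
        dsimp only at haj hbj
        have h1 : (y j).1 = 0 := by linarith
        have h2 : ‖(y j).2‖ = 0 := by linarith
        have h2' : (y j).2 = 0 := norm_eq_zero.1 h2
        exact Prod.ext h1 h2'
      · exact hsuppy j hI0
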